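/- Let R be a commutative ring, n = m d, and φ̄ : R_1^n → R_0^{n l} the blockwise extension of the Gray map φ (with φ as above, R_0 = R). If C ⊆ R_1^n is a quasi-cyclic code of index d (with respect to blocks of length m), then φ̄(C) is a quasi-cyclic code of index l·d of length n l over R, and conversely. -/

import Mathlib

open Polynomial

/-! Componentwise, `φ̄` is `φ` composed with the ring isomorphism `R₁ ≃ R × R`, and `φ` is
injective: its first coordinate recovers `a`, and its last one then recovers `b` because `β'_{l-1}`
is a unit. Since `φ̄` acts entrywise it commutes with the block shifts, `φ̄ ∘ σ_d = σ_{l d} ∘ φ̄`,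
and an injective map conjugating two maps transports invariance of a set in both directions. -/

theorem Function.Semiconj.image_eq_self_iff {α β : Type*} {f : α → β} {ga : α → α}
    {gb : β → β} (h : Function.Semiconj f ga gb) (hf : Function.Injective f) (s : Set α) :
    ga '' s = s ↔ gb '' (f '' s) = f '' s := by
  rw [← h.set_image s, (Set.image_injective.mpr hf).eq_iff]

theorem Prod.ext_of_fst_eq_of_add_mul_sub_eq {R : Type*} [CommRing R] {u : R} (hu : IsUnit u)
    (b : R) {p q : R × R} (h₁ : p.1 = q.1)
    (h₂ : b * p.1 + u * (p.2 - p.1) = b * q.1 + u * (q.2 - q.1)) : p = q := by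
  rw [h₁] at h₂
  exact Prod.ext h₁ (sub_left_inj.mp (hu.mul_left_cancel (add_left_cancel h₂)))

/-- Vectors of length `n = m·d` over `R₁` are modelled as `Fin d → Fin m → R₁`, and the
Gray image as `l·d` blocks of length `m`, i.e. `Fin l → Fin d → Fin m → R`. -/
theorem stmt13 (R : Type*) [CommRing R] (m d l : ℕ) [NeZero m] (hl : 2 ≤ l)
    (β β' : Fin l → R) (hβ' : IsUnit (β' ⟨l - 1, by omega⟩))
    (Ψ : AdjoinRoot (X ^ 2 - X : R[X]) ≃+* R × R)
    (C : Submodule (AdjoinRoot (X ^ 2 - X : R[X]))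
      (Fin d → Fin m → AdjoinRoot (X ^ 2 - X : R[X])))
    (φbar : (Fin d → Fin m → AdjoinRoot (X ^ 2 - X : R[X])) → Fin l → Fin d → Fin m → R)
    (hφbar : ∀ c, φbar c = fun r j i =>
      if r.val = 0 then (Ψ (c j i)).1
      else β r * (Ψ (c j i)).1 + β' r * ((Ψ (c j i)).2 - (Ψ (c j i)).1)) :
    ((fun c : Fin d → Fin m → AdjoinRoot (X ^ 2 - X : R[X]) => fun j i => c j (i - 1)) ''
        (C : Set _) = (C : Set _)) ↔
      ((fun y : Fin l → Fin d → Fin m → R => fun r j i => y r j (i - 1)) ''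
        (φbar '' (C : Set _)) = φbar '' (C : Set _)) := by
  have hshift : Function.Semiconj φbar (fun c j i => c j (i - 1))
      (fun y r j i => y r j (i - 1)) := fun c => by rw [hφbar, hφbar]
  have hinj : Function.Injective φbar := by
    intro c c' h
    funext j i
    have hcoord (r : Fin l) : φbar c r j i = φbar c' r j i := by rw [h]
    have hfirst := hcoord ⟨0, by omega⟩
    have hlast := hcoord ⟨l - 1, by omega⟩
    simp only [hφbar] at hfirst
    simp only [hφbar, if_neg (show l - 1 ≠ 0 by omega)] at hlast
    exact Ψ.injective (Prod.ext_of_fst_eq_of_add_mul_sub_eq hβ' _ hfirst hlast)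
  exact hshift.image_eq_self_iff hinj C
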